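/- Let L be a first-order language with function symbols and predicate symbols of finite arities, let T(L) be the clone of terms of L (with substitution x_i[g] = g i, f(t_1,…,t_n)[g] = f(t_1[g],…,t_n[g])), and let F(L) be the set of formulas of L, defined inductively: atomic formulas r(t_1,…,t_n) for predicate symbols r of arity n and terms t_j; the constant 𝖥; p ⇒ q for formulas p, q; and ∀p for a formula p. Define substitution F(L) × (ℕ → T(L)) → F(L) recursively by: r(t_1,…,t_n)[g] = r(t_1[g],…,t_n[g]); 𝖥[g] = 𝖥; (p ⇒ q)[g] = (p[g]) ⇒ (q[g]); (∀p)[g] = ∀(p[x_1, (g 1)⁺, (g 2)⁺, …]), where t⁺ := t[x_2, x_3, …]. Then F(L) is a right T(L)-algebra: for all formulas p and all g, h : ℕ → T(L), (1) p[x] = p where x(i) = x_i, and (2) (p[g])[h] = p[g★h] where (g★h)(i) = (g i)[h]. -/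
import Mathlib


/-- Terms of a first-order language with function symbols `F` of arities `ar`. -/
inductive Tm (F : Type*) (ar : F → ℕ) : Type _ where
  | var : ℕ+ → Tm F ar
  | fn : (f : F) → (Fin (ar f) → Tm F ar) → Tm F ar

/-- Substitution of terms for variables. -/
def Tm.subst {F : Type*} {ar : F → ℕ} : Tm F ar → (ℕ+ → Tm F ar) → Tm F ar
  | var i, g => g i
  | fn f ts, g => fn f (fun k => (ts k).subst g)

/-- Formulas of a first-order language with function symbols `F` (arities `ar`) and
predicate symbols `R` (arities `arR`): atomic formulas `r(t_1,…,t_n)`, the constant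
`𝖥`, implications `p ⇒ q`, and universal quantifications `∀p`. -/
inductive Fm (F : Type*) (ar : F → ℕ) (R : Type*) (arR : R → ℕ) : Type _ where
  | atom : (r : R) → (Fin (arR r) → Tm F ar) → Fm F ar R arR
  | fls : Fm F ar R arR
  | imp : Fm F ar R arR → Fm F ar R arR → Fm F ar R arR
  | all : Fm F ar R arR → Fm F ar R arR

/-- Substitution of terms in formulas: `r(t_1,…,t_n)[g] = r(t_1[g],…,t_n[g])`,
`𝖥[g] = 𝖥`, `(p ⇒ q)[g] = (p[g]) ⇒ (q[g])`, and
`(∀p)[g] = ∀(p[x_1, (g 1)⁺, (g 2)⁺, …])` where `t⁺ = t[x_2,x_3,…]`. -/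
def Fm.subst {F : Type*} {ar : F → ℕ} {R : Type*} {arR : R → ℕ} :
    Fm F ar R arR → (ℕ+ → Tm F ar) → Fm F ar R arR
  | atom r ts, g => atom r (fun k => (ts k).subst g)
  | fls, _ => fls
  | imp p q, g => imp (p.subst g) (q.subst g)
  | all p, g =>
      all (p.subst (fun j =>
        if j = 1 then Tm.var 1
        else (g (j - 1)).subst (fun k => Tm.var (k + 1))))


lemma Tm.subst_id {F : Type*} {ar : F → ℕ} : ∀ t : Tm F ar,
    t.subst (fun i => Tm.var i) = t
  | var i => rfl
  | fn f ts => by simp only [Tm.subst]; exact congrArg _ (funext fun k => Tm.subst_id (ts k))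

lemma Tm.subst_subst {F : Type*} {ar : F → ℕ} : ∀ (t : Tm F ar) (g h : ℕ+ → Tm F ar),
    (t.subst g).subst h = t.subst (fun i => (g i).subst h)
  | var i, g, h => rfl
  | fn f ts, g, h => by
      simp only [Tm.subst]
      exact congrArg _ (funext fun k => Tm.subst_subst (ts k) g h)

lemma pnat_sub_add (j : ℕ+) (hj : j ≠ 1) : j - 1 + 1 = j := by
  have h1 : (1 : ℕ+) < j := lt_of_le_of_ne j.one_le (Ne.symm hj)
  apply PNat.coe_injective
  rw [PNat.add_coe, PNat.sub_coe, if_pos h1]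
  have h2 : (1 : ℕ) < (j : ℕ) := h1
  simp only [PNat.one_coe]
  omega

lemma Fm.subst_id {F : Type*} {ar : F → ℕ} {R : Type*} {arR : R → ℕ} :
    ∀ p : Fm F ar R arR, p.subst (fun i => Tm.var i) = p
  | atom r ts => by
      simp only [Fm.subst]
      exact congrArg _ (funext fun k => Tm.subst_id (ts k))
  | fls => rfl
  | imp p q => by simp only [Fm.subst, Fm.subst_id p, Fm.subst_id q]
  | all p => by
      simp only [Fm.subst]
      congr 1
      have : (fun j : ℕ+ =>
          if j = 1 then Tm.var (F := F) (ar := ar) 1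
          else (Tm.var (j - 1)).subst (fun k => Tm.var (k + 1))) = fun i => Tm.var i := by
        funext j
        by_cases hj : j = 1
        · simp [hj]
        · simp only [hj, if_false, Tm.subst, pnat_sub_add j hj]
      rw [this, Fm.subst_id p]

lemma Fm.subst_subst {F : Type*} {ar : F → ℕ} {R : Type*} {arR : R → ℕ} :
    ∀ (p : Fm F ar R arR) (g h : ℕ+ → Tm F ar),
      (p.subst g).subst h = p.subst (fun i => (g i).subst h)
  | atom r ts, g, h => by
      simp only [Fm.subst]
      exact congrArg _ (funext fun k => Tm.subst_subst (ts k) g h)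
  | fls, _, _ => rfl
  | imp p q, g, h => by simp only [Fm.subst, Fm.subst_subst p, Fm.subst_subst q]
  | all p, g, h => by
      simp only [Fm.subst, Fm.subst_subst p]
      refine congrArg Fm.all (congrArg p.subst (funext fun j => ?_))
      by_cases hj : j = 1
      · simp [hj, Tm.subst]
      · simp only [hj, if_false, Tm.subst_subst]
        refine congrArg ((g (j - 1)).subst) (funext fun k => ?_)
        have hk : (k + 1 : ℕ+) ≠ 1 := by
          intro h'
          exact absurd (congrArg (PNat.val) h') (by simp)
        have hk2 : k + 1 - 1 = k := add_right_cancel (pnat_sub_add (k + 1) hk)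
        simp only [Tm.subst, hk, if_false, hk2, Tm.subst_subst]

/-- The set `F(L)` of formulas is a right `T(L)`-algebra for the clone `T(L)` of
terms: `p[x] = p` and `(p[g])[h] = p[g★h]` where `(g★h)(i) = (g i)[h]`. -/
theorem formulas_form_right_algebra_over_terms {F : Type*} (ar : F → ℕ)
    (R : Type*) (arR : R → ℕ) :
    (∀ p : Fm F ar R arR, p.subst (fun i => Tm.var i) = p) ∧
    (∀ (p : Fm F ar R arR) (g h : ℕ+ → Tm F ar),
      (p.subst g).subst h = p.subst (fun i => (g i).subst h)) := by
  exact ⟨Fm.subst_id, Fm.subst_subst⟩
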